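/- Let Γ act on a set X with subgroups G₀ ≤ G₁, G₂ ≤ Γ such that G₁ ∩ G₂ = G₀, and suppose Θ₁, Θ₂ ⊆ X form a proper interactive pair: both nonempty, disjoint, G₀-invariant, with φ(Θ₂) ⊆ Θ₁ for all φ ∈ G₁ \ G₀ and φ(Θ₁) ⊆ Θ₂ for all φ ∈ G₂ \ G₀, and there exists θ₁ ∈ Θ₁ with θ₁ ∉ φ(Θ₂) for all φ ∈ G₁ \ G₀, and similarly θ₂ ∈ Θ₂. Then the natural map G₁ *_{G₀} G₂ → Γ is injective. -/

import Mathlib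

/-!
An element of the amalgam has a normal form `h * g₁ * ⋯ * gₙ` with `h ∈ G₀` and letters
`gₖ ∈ G_{iₖ} \ G₀` from alternating factors. Absorbing `h` into `g₁` keeps it in `G_{i₁} \ G₀`, so
the element acts on `X` as an alternating word, and ping-pong carries any point of a set `Θ_c`,
with `c` different from the factor of the last letter, into `Θ_{i₁}`. If `c ≠ i₁` the point is
moved because the sets are disjoint; if `c = i₁`, take for it the proper point of `Θ_{i₁}`, which
no element of `G_{i₁} \ G₀` reaches from the other set.
-/

open Function

theorem Subgroup.IsComplement.eq_one_of_mem_of_mem {G : Type*} [Group G] {S T : Set G}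
    (hST : Subgroup.IsComplement S T) (hS : 1 ∈ S) (hT : 1 ∈ T) {g : G} (hgS : g ∈ S)
    (hgT : g ∈ T) : g = 1 := by
  have := hST.1 (a₁ := (⟨g, hgS⟩, ⟨1, hT⟩)) (a₂ := (⟨1, hS⟩, ⟨g, hgT⟩)) (by simp)
  simpa using congrArg (fun p => (p.1 : G)) this

theorem List.IsChain.exists_isChain_append_singleton {α : Type*} [Nontrivial α] {l : List α}
    (hl : l.IsChain (· ≠ ·)) : ∃ c, (l ++ [c]).IsChain (· ≠ ·) := by
  cases hlast : l.getLast? with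
  | none => exact ⟨Classical.arbitrary α, by simp_all [List.getLast?_eq_none_iff]⟩
  | some e =>
    obtain ⟨c, hc⟩ := exists_ne e
    exact ⟨c, hl.append (List.isChain_singleton c) (by simp [hlast, hc.symm])⟩

namespace Monoid.PushoutI.NormalWord

variable {ι : Type*} {G : ι → Type*} {H : Type*} [∀ i, Group (G i)] [Group H]
  {φ : ∀ i, H →* G i} {d : Transversal φ}

theorem reduced (w : NormalWord d) : Reduced φ w.toWord := by
  rintro ⟨i, g⟩ hg hgφ
  exact w.ne_one _ hg <| (d.compl i).eq_one_of_mem_of_mem (one_mem _) (d.one_mem i) hgφ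
    (w.normalized i g hg)

theorem lift_prod {K : Type*} [Monoid K] (f : ∀ i, G i →* K) (k : H →* K)
    (hf : ∀ i, (f i).comp (φ i) = k) (w : NormalWord d) :
    lift f k hf w.prod = k w.head * (w.toList.map fun s => f s.1 s.2).prod := by
  simp [prod, CoprodI.Word.prod, map_list_prod, List.map_map, Function.comp_def]

end Monoid.PushoutI.NormalWord

section PingPong

variable {ι Γ X : Type*} [Group Γ] [MulAction Γ X] {H : Subgroup Γ} {G : ι → Subgroup Γ}
  {Θ : ι → Set X}

theorem list_prod_smul_mem_of_isChain
    (hmap : ∀ i j, i ≠ j → ∀ g ∈ G i, g ∉ H → ∀ x ∈ Θ j, g • x ∈ Θ i)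
    {l : List (Σ i, G i)} (hl : ∀ s ∈ l, (s.2 : Γ) ∉ H) {c : ι}
    (hc : (l.map Sigma.fst ++ [c]).IsChain (· ≠ ·)) {x : X} (hx : x ∈ Θ c) :
    (l.map fun s => (s.2 : Γ)).prod • x ∈ Θ ((l.map Sigma.fst).headD c) := by
  induction l with
  | nil => simpa using hx
  | cons s l ih =>
    rw [List.map_cons, List.cons_append, List.isChain_cons] at hc
    have hne : s.1 ≠ (l.map Sigma.fst).headD c := hc.1 _ (by cases l <;> simp)
    simp only [List.map_cons, List.prod_cons, List.headD_cons, mul_smul]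
    exact hmap _ _ hne _ s.2.2 (hl s List.mem_cons_self) _
      (ih (fun t ht => hl t (List.mem_cons_of_mem _ ht)) hc.2)

theorem mul_list_prod_ne_one_of_isChain (hle : ∀ i, H ≤ G i)
    (hdisj : Pairwise (Disjoint on Θ))
    (hmap : ∀ i j, i ≠ j → ∀ g ∈ G i, g ∉ H → ∀ x ∈ Θ j, g • x ∈ Θ i)
    (hproper : ∀ i, ∃ θ ∈ Θ i, ∀ j, j ≠ i → ∀ g ∈ G i, g ∉ H → ∀ x ∈ Θ j, g • x ≠ θ)
    {h : Γ} (hh : h ∈ H) {s : Σ i, G i} {l : List (Σ i, G i)}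
    (hl : ∀ t ∈ s :: l, (t.2 : Γ) ∉ H) {c : ι}
    (hc : ((s :: l).map Sigma.fst ++ [c]).IsChain (· ≠ ·)) :
    h * ((s :: l).map fun t => (t.2 : Γ)).prod ≠ 1 := by
  intro h1
  have hg : h * s.2 ∈ G s.1 := mul_mem (hle _ hh) s.2.2
  have hgH : h * s.2 ∉ H := fun hm =>
    hl s List.mem_cons_self (by simpa using mul_mem (inv_mem hh) hm)
  rw [List.map_cons, List.cons_append, List.isChain_cons] at hc
  have hne : s.1 ≠ (l.map Sigma.fst).headD c := hc.1 _ (by cases l <;> simp)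
  rw [List.map_cons, List.prod_cons, ← mul_assoc] at h1
  have hfix (θ : X) : (h * s.2) • (l.map fun t => (t.2 : Γ)).prod • θ = θ := by
    rw [← mul_smul, h1, one_smul]
  obtain ⟨θ, hθ, hθproper⟩ := hproper c
  have htail := list_prod_smul_mem_of_isChain hmap
    (fun t ht => hl t (List.mem_cons_of_mem _ ht)) hc.2 hθ
  by_cases hcs : c = s.1
  · subst hcs
    exact hθproper _ hne.symm _ hg hgH _ htail (hfix θ)
  · have hθs := hmap _ _ hne _ hg hgH _ htail
    rw [hfix] at hθs
    exact Set.disjoint_left.1 (hdisj hcs) hθ hθs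

theorem Monoid.PushoutI.lift_subtype_injective_of_pingPong [Nontrivial ι]
    (hle : ∀ i, H ≤ G i) (hdisj : Pairwise (Disjoint on Θ))
    (hmap : ∀ i j, i ≠ j → ∀ g ∈ G i, g ∉ H → ∀ x ∈ Θ j, g • x ∈ Θ i)
    (hproper : ∀ i, ∃ θ ∈ Θ i, ∀ j, j ≠ i → ∀ g ∈ G i, g ∉ H → ∀ x ∈ Θ j, g • x ≠ θ) :
    Injective (lift (φ := fun i => Subgroup.inclusion (hle i)) (fun i => (G i).subtype)
      H.subtype (fun _ => MonoidHom.ext fun _ => rfl)) := by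
  classical
  obtain ⟨d⟩ := NormalWord.transversal_nonempty _ fun i => Subgroup.inclusion_injective (hle i)
  rw [injective_iff_map_eq_one]
  intro x hx
  obtain ⟨w, rfl⟩ := (NormalWord.equiv (d := d)).symm.surjective x
  change w.prod = 1
  change lift _ _ _ w.prod = 1 at hx
  rw [NormalWord.lift_prod] at hx
  have hl : ∀ s ∈ w.toList, (s.2 : Γ) ∉ H := fun s hs hsH => w.reduced s hs ⟨⟨_, hsH⟩, rfl⟩
  obtain ⟨c, hc⟩ := ((List.isChain_map _).2 w.chain_ne).exists_isChain_append_singleton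
  rcases hw : w.toList with _ | ⟨s, l⟩
  · rw [NormalWord.ext (w₂ := .empty) (by simpa [hw] using hx) hw, NormalWord.prod_empty]
  · rw [hw] at hx hl hc
    exact absurd hx (mul_list_prod_ne_one_of_isChain hle hdisj hmap hproper w.head.2 hl hc)

end PingPong

/-- **Ping-pong for an amalgam of two groups.**
Let `Γ` act on a set `X`, with subgroups `G₀ ≤ G₁, G₂ ≤ Γ` such that `G₁ ⊓ G₂ = G₀`,
and suppose `Θ₁, Θ₂ ⊆ X` form a proper interactive pair: both nonempty, disjoint,
`G₀`-invariant, with `φ(Θ₂) ⊆ Θ₁` for all `φ ∈ G₁ \ G₀` and `φ(Θ₁) ⊆ Θ₂` for all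
`φ ∈ G₂ \ G₀`, and there is `θ₁ ∈ Θ₁` avoided by `φ(Θ₂)` for all `φ ∈ G₁ \ G₀`, and
similarly `θ₂ ∈ Θ₂`.  Then the natural map `G₁ *_{G₀} G₂ → Γ` is injective.
(The amalgamated product is realized as the pushout over the index type `Bool`,
with `true ↦ G₁` and `false ↦ G₂`.) -/
theorem pingpong_two_factor_injective
    {Γ X : Type} [Group Γ] [MulAction Γ X]
    (G₀ G₁ G₂ : Subgroup Γ)
    (hle₁ : G₀ ≤ G₁) (hle₂ : G₀ ≤ G₂)
    (Θ₁ Θ₂ : Set X)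
    (hdisj : Θ₁ ∩ Θ₂ = ∅)
    (hmap₁ : ∀ g, g ∈ G₁ → g ∉ G₀ → ∀ x ∈ Θ₂, g • x ∈ Θ₁)
    (hmap₂ : ∀ g, g ∈ G₂ → g ∉ G₀ → ∀ x ∈ Θ₁, g • x ∈ Θ₂)
    (hproper₁ : ∃ θ₁ ∈ Θ₁, ∀ g, g ∈ G₁ → g ∉ G₀ → ∀ x ∈ Θ₂, g • x ≠ θ₁)
    (hproper₂ : ∃ θ₂ ∈ Θ₂, ∀ g, g ∈ G₂ → g ∉ G₀ → ∀ x ∈ Θ₁, g • x ≠ θ₂) :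
    Function.Injective
      (Monoid.PushoutI.lift
        (φ := fun b : Bool => Subgroup.inclusion
          (show G₀ ≤ (if b then G₁ else G₂) from by cases b <;> simpa))
        (fun b => (if b then G₁ else G₂ : Subgroup Γ).subtype) G₀.subtype
        (fun b => MonoidHom.ext fun x => rfl)) := by
  have hdisj' : Disjoint Θ₁ Θ₂ := Set.disjoint_iff_inter_eq_empty.2 hdisj
  refine Monoid.PushoutI.lift_subtype_injective_of_pingPong
    (G := fun b : Bool => if b then G₁ else G₂) (Θ := fun b : Bool => if b then Θ₁ else Θ₂)
    _ ?_ ?_ ?_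
  · rintro (_ | _) (_ | _) hij
    exacts [absurd rfl hij, hdisj'.symm, hdisj', absurd rfl hij]
  · rintro (_ | _) (_ | _) hij
    exacts [absurd rfl hij, hmap₂, hmap₁, absurd rfl hij]
  · rintro (_ | _)
    · obtain ⟨θ, hθ, hθproper⟩ := hproper₂
      exact ⟨θ, hθ, by simpa using hθproper⟩
    · obtain ⟨θ, hθ, hθproper⟩ := hproper₁
      exact ⟨θ, hθ, by simpa using hθproper⟩
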